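/- arXiv:2302.03505 — 2 statements merged into one kernel-verified Lean document; each statement's English description precedes it below -/
import Mathlib

section
/- For the fixed-length binning scheme, the variance of the OPORP inner product estimator â = Σ_j x_j y_j equals (s-1) Σ_i u_i^2 v_i^2 + (1/k)·((D-k)/(D-1))·(a^2 + Σ_i u_i^2 · Σ_i v_i^2 − 2 Σ_i u_i^2 v_i^2), where a = Σ_i u_i v_i. -/
/-!
For a fixed permutation the estimator is the quadratic form `∑ᵢ ∑ᵢ' T i i' uᵢ vᵢ' rᵢ rᵢ'`, where
`T i i'` indicates that `i` and `i'` land in the same bin, and its diagonal part has mean `a`.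
Since `E[rᵢ rⱼ rₖ rₗ]` vanishes unless the indices pair up, a quadratic form `∑ cᵢⱼ rᵢ rⱼ` in
independent standardized variables with fourth moment `s` has variance
`(s - 3) ∑ cᵢᵢ² + ∑ cᵢⱼ² + ∑ cᵢⱼ cⱼᵢ`. Averaged over the permutation, `T i i'` becomes
`(D/k - 1)/(D - 1)` for `i ≠ i'`: by exchangeability it is the same for all such pairs, and every
coordinate shares its bin with exactly `D/k - 1` others.
-/

open MeasureTheory ProbabilityTheory Finset
open scoped ENNReal

instance ENNReal.holderTriple_four_four_two : ENNReal.HolderTriple 4 4 2 :=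
  ⟨by rw [← two_mul, show (4 : ℝ≥0∞) = 2 * 2 by norm_num, ENNReal.mul_inv (by simp) (by simp),
    ← mul_assoc, ENNReal.mul_inv_cancel (by simp) (by simp), one_mul]⟩

lemma sum_fin_ite_mul_ite {k a a' : ℕ} (ha : a < k) :
    ∑ j : Fin k, (if a = j then (1 : ℝ) else 0) * (if a' = j then 1 else 0)
      = if a = a' then 1 else 0 := by
  rw [sum_eq_single ⟨a, ha⟩ (fun j _ hj => by rw [if_neg fun h => hj (Fin.ext h.symm),
    zero_mul]) (by simp)]
  simp [eq_comm]

lemma sum_bin_mul_sum_bin {ι : Type*} [Fintype ι] {k : ℕ} (b : ι → ℕ) (hb : ∀ i, b i < k)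
    (f g : ι → ℝ) :
    ∑ j : Fin k, (∑ i, f i * (if b i = j then 1 else 0)) * (∑ i, g i * (if b i = j then 1 else 0))
      = ∑ i, ∑ i', (if b i = b i' then 1 else 0) * (f i * g i') := by
  simp_rw [sum_mul_sum]
  rw [sum_comm]
  refine sum_congr rfl fun i _ => ?_
  rw [sum_comm]
  refine sum_congr rfl fun i' _ => ?_
  rw [← sum_fin_ite_mul_ite (hb i), sum_mul]
  exact sum_congr rfl fun j _ => by ring

namespace ProbabilityTheory.iIndepFun

variable {Ω ι : Type*} [MeasurableSpace Ω] {μ : Measure Ω} {r : ι → Ω → ℝ} {s : ℝ}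

lemma integral_mul_eq_ite [DecidableEq ι] (hindep : iIndepFun r μ)
    (hr : ∀ i, AEStronglyMeasurable (r i) μ) (hm1 : ∀ i, ∫ ω, r i ω ∂μ = 0)
    (hm2 : ∀ i, ∫ ω, r i ω ^ 2 ∂μ = 1) (i j : ι) :
    ∫ ω, r i ω * r j ω ∂μ = if i = j then 1 else 0 := by
  rcases eq_or_ne i j with rfl | hij
  · simpa [← sq] using hm2 i
  · simpa [hij, hm1] using (hindep.indepFun hij).integral_mul_eq_mul_integral (hr i) (hr j)

lemma integral_mul_eq_zero_of_ne (hindep : iIndepFun r μ)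
    (hr : ∀ i, AEStronglyMeasurable (r i) μ) (hm1 : ∀ i, ∫ ω, r i ω ∂μ = 0) {i j k l : ι}
    (hij : i ≠ j) (hik : i ≠ k) (hil : i ≠ l) :
    ∫ ω, r i ω * (r j ω * r k ω * r l ω) ∂μ = 0 := by
  classical
  have hdisj : Disjoint ({i} : Finset ι) {j, k, l} := by simp [hij, hik, hil]
  have hind : IndepFun (r i) (fun ω => r j ω * r k ω * r l ω) μ :=
    (hindep.indepFun_finset₀ _ _ hdisj fun a => (hr a).aemeasurable).comp
      (φ := fun x : ({i} : Finset ι) → ℝ => x ⟨i, mem_singleton_self i⟩)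
      (ψ := fun x : ({j, k, l} : Finset ι) → ℝ => x ⟨j, by simp⟩ * x ⟨k, by simp⟩ * x ⟨l, by simp⟩)
      (by fun_prop) (by fun_prop)
  simpa [hm1 i] using hind.integral_mul_eq_mul_integral (hr i) (((hr j).mul (hr k)).mul (hr l))

lemma integral_sq_mul_sq_of_ne (hindep : iIndepFun r μ) (hr : ∀ i, AEStronglyMeasurable (r i) μ)
    (hm2 : ∀ i, ∫ ω, r i ω ^ 2 ∂μ = 1) {i j : ι} (hij : i ≠ j) :
    ∫ ω, r i ω ^ 2 * r j ω ^ 2 ∂μ = 1 := by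
  have hind := (hindep.indepFun hij).comp (φ := fun x : ℝ => x ^ 2) (ψ := fun x : ℝ => x ^ 2)
    (by fun_prop) (by fun_prop)
  simpa [hm2] using hind.integral_mul_eq_mul_integral ((hr i).pow 2) ((hr j).pow 2)

lemma integral_mul_mul_mul [DecidableEq ι] (hindep : iIndepFun r μ)
    (hr : ∀ i, AEStronglyMeasurable (r i) μ) (hm1 : ∀ i, ∫ ω, r i ω ∂μ = 0)
    (hm2 : ∀ i, ∫ ω, r i ω ^ 2 ∂μ = 1) (hm4 : ∀ i, ∫ ω, r i ω ^ 4 ∂μ = s) (i j k l : ι) :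
    ∫ ω, r i ω * r j ω * r k ω * r l ω ∂μ
      = (if i = j then 1 else 0) * (if k = l then 1 else 0)
        + (if i = k then 1 else 0) * (if j = l then 1 else 0)
        + (if i = l then 1 else 0) * (if j = k then 1 else 0)
        + (s - 3) * (if i = j ∧ j = k ∧ k = l then 1 else 0) := by
  have isolated {a b c d : ι} (hab : a ≠ b) (hac : a ≠ c) (had : a ≠ d)
      (h : ∀ ω, r i ω * r j ω * r k ω * r l ω = r a ω * (r b ω * r c ω * r d ω)) :
      ∫ ω, r i ω * r j ω * r k ω * r l ω ∂μ = 0 :=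
    (integral_congr_ae (.of_forall h)).trans (hindep.integral_mul_eq_zero_of_ne hr hm1 hab hac had)
  have paired {a b : ι} (hab : a ≠ b)
      (h : ∀ ω, r i ω * r j ω * r k ω * r l ω = r a ω ^ 2 * r b ω ^ 2) :
      ∫ ω, r i ω * r j ω * r k ω * r l ω ∂μ = 1 :=
    (integral_congr_ae (.of_forall h)).trans (hindep.integral_sq_mul_sq_of_ne hr hm2 hab)
  rcases eq_or_ne i j with rfl | hij
  · rcases eq_or_ne i k with rfl | hik
    · rcases eq_or_ne i l with rfl | hil
      · rw [← hm4 i]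
        simp only [and_self, if_true]
        ring_nf
      · rw [isolated hil.symm hil.symm hil.symm fun ω => by ring]
        simp [hil]
    · rcases eq_or_ne k l with rfl | hkl
      · rw [paired hik fun ω => by ring]
        simp [hik]
      · rw [isolated hik.symm hik.symm hkl fun ω => by ring]
        simp [hik, hkl]
  · rcases eq_or_ne i k with rfl | hik
    · rcases eq_or_ne j l with rfl | hjl
      · rw [paired hij fun ω => by ring]
        simp [hij]
      · rw [isolated hij.symm hij.symm hjl fun ω => by ring]
        simp [hij, hij.symm, hjl]
    · rcases eq_or_ne i l with rfl | hil
      · rcases eq_or_ne j k with rfl | hjk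
        · rw [paired hij fun ω => by ring]
          simp [hij]
        · rw [isolated hij.symm hjk hij.symm fun ω => by ring]
          simp [hij, hjk, hik]
      · rw [isolated hij hik hil fun ω => by ring]
        simp [hij, hik, hil]

lemma integral_centered_mul_centered [DecidableEq ι] [IsProbabilityMeasure μ]
    (hindep : iIndepFun r μ) (hL4 : ∀ i, MemLp (r i) 4 μ) (hm1 : ∀ i, ∫ ω, r i ω ∂μ = 0)
    (hm2 : ∀ i, ∫ ω, r i ω ^ 2 ∂μ = 1) (hm4 : ∀ i, ∫ ω, r i ω ^ 4 ∂μ = s) (i j k l : ι) :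
    ∫ ω, (r i ω * r j ω - if i = j then 1 else 0) * (r k ω * r l ω - if k = l then 1 else 0) ∂μ
      = (if i = k then 1 else 0) * (if j = l then 1 else 0)
        + (if i = l then 1 else 0) * (if j = k then 1 else 0)
        + (s - 3) * (if i = j ∧ j = k ∧ k = l then 1 else 0) := by
  have hr i := (hL4 i).aestronglyMeasurable
  have hL2 (a b : ι) : MemLp (fun ω => r a ω * r b ω) 2 μ := (hL4 b).mul' (hL4 a)
  set δ : ι → ι → ℝ := fun a b => if a = b then 1 else 0 with hδ
  have hexpand : ∀ ω, (r i ω * r j ω - δ i j) * (r k ω * r l ω - δ k l)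
      = r i ω * r j ω * (r k ω * r l ω) - (δ k l * (r i ω * r j ω) + δ i j * (r k ω * r l ω))
        + δ i j * δ k l := fun ω => by ring
  have hint4 : Integrable (fun ω => r i ω * r j ω * (r k ω * r l ω)) μ :=
    (hL2 i j).integrable_mul (hL2 k l)
  have hintij := ((hL2 i j).integrable one_le_two).const_mul (δ k l)
  have hintkl := ((hL2 k l).integrable one_le_two).const_mul (δ i j)
  rw [integral_congr_ae (.of_forall hexpand), integral_add (by fun_prop) (by fun_prop),
    integral_sub hint4 (by fun_prop), integral_add hintij hintkl,
    integral_const_mul, integral_const_mul, integral_const]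
  simp only [hindep.integral_mul_eq_ite hr hm1 hm2, ← mul_assoc,
    hindep.integral_mul_mul_mul hr hm1 hm2 hm4 i j k l, hδ]
  simp only [mul_ite, mul_one, mul_zero, probReal_univ, smul_eq_mul]
  split_ifs <;> ring

theorem integral_quadratic_form_sub_trace_sq [Fintype ι] [DecidableEq ι] [IsProbabilityMeasure μ]
    (hindep : iIndepFun r μ) (hL4 : ∀ i, MemLp (r i) 4 μ) (hm1 : ∀ i, ∫ ω, r i ω ∂μ = 0)
    (hm2 : ∀ i, ∫ ω, r i ω ^ 2 ∂μ = 1) (hm4 : ∀ i, ∫ ω, r i ω ^ 4 ∂μ = s) (c : ι → ι → ℝ) :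
    ∫ ω, (∑ i, ∑ j, c i j * (r i ω * r j ω) - ∑ i, c i i) ^ 2 ∂μ
      = (s - 3) * ∑ i, c i i ^ 2 + ∑ i, ∑ j, c i j ^ 2 + ∑ i, ∑ j, c i j * c j i := by
  set X : ι × ι → Ω → ℝ := fun p ω => r p.1 ω * r p.2 ω - if p.1 = p.2 then 1 else 0
  have hcentered : ∀ ω, ∑ i, ∑ j, c i j * (r i ω * r j ω) - ∑ i, c i i
      = ∑ p : ι × ι, c p.1 p.2 * X p ω := fun ω => by
    simp [X, Fintype.sum_prod_type, mul_sub, sum_sub_distrib]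
  have hX (p : ι × ι) : MemLp (X p) 2 μ := ((hL4 p.2).mul' (hL4 p.1)).sub (memLp_const _)
  have hint (p q : ι × ι) : Integrable (fun ω => c p.1 p.2 * X p ω * (c q.1 q.2 * X q ω)) μ :=
    ((hX p).const_mul _).integrable_mul ((hX q).const_mul _)
  have hcov (p q : ι × ι) : ∫ ω, c p.1 p.2 * X p ω * (c q.1 q.2 * X q ω) ∂μ
      = c p.1 p.2 * c q.1 q.2 * ((if p.1 = q.1 then 1 else 0) * (if p.2 = q.2 then 1 else 0)
        + (if p.1 = q.2 then 1 else 0) * (if p.2 = q.1 then 1 else 0)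
        + (s - 3) * (if p.1 = p.2 ∧ p.2 = q.1 ∧ q.1 = q.2 then 1 else 0)) := by
    rw [← hindep.integral_centered_mul_centered hL4 hm1 hm2 hm4, ← integral_const_mul]
    congr 1 with ω
    ring
  simp_rw [hcentered, sq, sum_mul_sum]
  rw [integral_finsetSum _ fun p _ => integrable_finsetSum _ fun q _ => hint p q]
  simp_rw [integral_finsetSum _ fun q _ => hint _ q]
  simp only [hcov, Fintype.sum_prod_type, mul_ite, mul_one, mul_zero, ite_and, mul_add,
    sum_add_distrib, sum_ite_eq, mem_univ, if_true, sum_ite_irrel, sum_const_zero]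
  rw [← sum_mul]
  ring

theorem integral_binned_estimator_sub_sq [Fintype ι] [DecidableEq ι] [IsProbabilityMeasure μ]
    (hindep : iIndepFun r μ) (hL4 : ∀ i, MemLp (r i) 4 μ) (hm1 : ∀ i, ∫ ω, r i ω ∂μ = 0)
    (hm2 : ∀ i, ∫ ω, r i ω ^ 2 ∂μ = 1) (hm4 : ∀ i, ∫ ω, r i ω ^ 4 ∂μ = s)
    {k : ℕ} (b : ι → ℕ) (hb : ∀ i, b i < k) (u v : ι → ℝ) :
    ∫ ω, ((∑ j : Fin k, (∑ i, u i * r i ω * (if b i = j then 1 else 0)) *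
        (∑ i, v i * r i ω * (if b i = j then 1 else 0))) - ∑ i, u i * v i) ^ 2 ∂μ
      = (s - 3) * ∑ i, u i ^ 2 * v i ^ 2
        + ∑ i, ∑ j,
            (if b i = b j then 1 else 0) * (u i ^ 2 * v j ^ 2 + u i * v i * (u j * v j)) := by
  set T : ι → ι → ℝ := fun i j => if b i = b j then 1 else 0
  have hform : ∀ ω, (∑ j : Fin k, (∑ i, u i * r i ω * (if b i = j then 1 else 0)) *
        (∑ i, v i * r i ω * (if b i = j then 1 else 0))) - ∑ i, u i * v i
      = ∑ i, ∑ j, T i j * (u i * v j) * (r i ω * r j ω) - ∑ i, T i i * (u i * v i) := by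
    intro ω
    rw [sum_bin_mul_sum_bin b hb]
    simp only [T, if_true, one_mul]
    congr 1
    exact sum_congr rfl fun i _ => sum_congr rfl fun j _ => by ring
  simp only [hform]
  rw [hindep.integral_quadratic_form_sub_trace_sq hL4 hm1 hm2 hm4, add_assoc]
  congr 1
  · simp [T, mul_pow]
  · rw [← sum_add_distrib]
    refine sum_congr rfl fun i _ => ?_
    rw [← sum_add_distrib]
    refine sum_congr rfl fun j _ => ?_
    simp only [T, eq_comm (a := b j)]
    split_ifs <;> ring

end ProbabilityTheory.iIndepFun

lemma card_sub_one_mul_sum_perm {α : Type*} [Fintype α] [DecidableEq α] (g : α → α → ℝ)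
    {i j : α} (hij : i ≠ j) :
    ((Fintype.card α : ℝ) - 1) * ∑ π : Equiv.Perm α, g (π i) (π j)
      = ∑ π : Equiv.Perm α, (∑ y, g (π i) y - g (π i) (π i)) := by
  have hswap : ∀ j' ∈ univ.erase i, ∑ π : Equiv.Perm α, g (π i) (π j')
      = ∑ π : Equiv.Perm α, g (π i) (π j) := fun j' hj' =>
    Fintype.sum_equiv (Equiv.mulRight (Equiv.swap j j')) _ _ fun π => by
      simp [Equiv.swap_apply_of_ne_of_ne hij (ne_of_mem_erase hj').symm]
  calc ((Fintype.card α : ℝ) - 1) * ∑ π : Equiv.Perm α, g (π i) (π j)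
      = ∑ j' ∈ univ.erase i, ∑ π : Equiv.Perm α, g (π i) (π j') := by
        rw [sum_congr rfl hswap, sum_const, card_erase_of_mem (mem_univ i), card_univ,
          nsmul_eq_mul, Nat.cast_pred (Fintype.card_pos_iff.2 ⟨i⟩)]
    _ = ∑ π : Equiv.Perm α, ∑ j' ∈ univ.erase i, g (π i) (π j') := sum_comm
    _ = ∑ π : Equiv.Perm α, (∑ y, g (π i) y - g (π i) (π i)) := by
        refine sum_congr rfl fun π _ => ?_
        rw [sum_erase_eq_sub (mem_univ i), Equiv.sum_comp π (g (π i))]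

lemma sum_ite_div_eq_div {D m : ℕ} (hm : m ∣ D) (x : Fin D) :
    ∑ y : Fin D, (if (x : ℕ) / m = (y : ℕ) / m then (1 : ℝ) else 0) = m := by
  obtain ⟨n, rfl⟩ := hm
  have hm0 : 0 < m := Nat.pos_of_ne_zero fun h => by simpa [h] using x.pos
  have hbin : (x : ℕ) / m * m + m ≤ m * n := by
    have := Nat.div_lt_of_lt_mul x.isLt
    nlinarith
  have hfilter : (range (m * n)).filter (fun y => (x : ℕ) / m = y / m)
      = Ico ((x : ℕ) / m * m) ((x : ℕ) / m * m + m) := by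
    ext y
    simp only [mem_filter, mem_range, mem_Ico, eq_comm (a := (x : ℕ) / m), Nat.div_eq_iff hm0]
    omega
  rw [Fin.sum_univ_eq_sum_range (fun y => if (x : ℕ) / m = y / m then (1 : ℝ) else 0),
    sum_boole, hfilter]
  simp

lemma sum_perm_ite_div_eq_div {D m : ℕ} (hm : m ∣ D) (i j : Fin D) :
    ∑ π : Equiv.Perm (Fin D), (if (π i : ℕ) / m = (π j : ℕ) / m then (1 : ℝ) else 0)
      = D.factorial * (if i = j then 1 else ((m : ℝ) - 1) / ((D : ℝ) - 1)) := by
  rcases eq_or_ne i j with rfl | hij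
  · simp [Fintype.card_perm]
  · have hD : (1 : ℝ) < D := by
      have : (i : ℕ) ≠ j := Fin.val_ne_of_ne hij
      exact_mod_cast (show 1 < D by omega)
    have key := card_sub_one_mul_sum_perm
      (fun x y : Fin D => if (x : ℕ) / m = (y : ℕ) / m then (1 : ℝ) else 0) hij
    simp only [sum_ite_div_eq_div hm, if_true, sum_const, card_univ, Fintype.card_perm,
      Fintype.card_fin, nsmul_eq_mul] at key
    rw [if_neg hij, mul_div_assoc', eq_div_iff (by linarith), mul_comm, key]

lemma sum_sum_ite_eq_mul {ι : Type*} [Fintype ι] [DecidableEq ι] (p : ℝ) (w : ι → ι → ℝ) :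
    ∑ i, ∑ j, (if i = j then 1 else p) * w i j = p * ∑ i, ∑ j, w i j + (1 - p) * ∑ i, w i i := by
  have hsplit (i j : ι) : (if i = j then 1 else p) = p + (1 - p) * (if i = j then 1 else 0) := by
    split_ifs <;> ring
  simp [hsplit, add_mul, sum_add_distrib, mul_sum]

theorem oporp_fixed_binning_variance_general
    {Ω : Type*} [MeasurableSpace Ω] (μ : Measure Ω) [IsProbabilityMeasure μ]
    {D k : ℕ} (hk : 0 < k) (hkD : k ∣ D)
    (u v : Fin D → ℝ) (s : ℝ) (r : Fin D → Ω → ℝ)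
    (hindep : iIndepFun r μ)
    (hL4 : ∀ i, MemLp (r i) 4 μ)
    (hm1 : ∀ i, ∫ ω, r i ω ∂μ = 0)
    (hm2 : ∀ i, ∫ ω, (r i ω) ^ 2 ∂μ = 1)
    (hm4 : ∀ i, ∫ ω, (r i ω) ^ 4 ∂μ = s) :
    (∑ π : Equiv.Perm (Fin D), ∫ ω,
        ((∑ j : Fin k,
            (∑ i, u i * r i ω * (if ((π i : ℕ) / (D / k) = (j : ℕ)) then (1 : ℝ) else 0)) *
            (∑ i, v i * r i ω * (if ((π i : ℕ) / (D / k) = (j : ℕ)) then (1 : ℝ) else 0)))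
          - ∑ i, u i * v i) ^ 2 ∂μ) / (Nat.factorial D : ℝ)
      = (s - 1) * (∑ i, (u i) ^ 2 * (v i) ^ 2)
        + (1 / k) * (((D : ℝ) - k) / ((D : ℝ) - 1)) *
          ((∑ i, u i * v i) ^ 2 + (∑ i, (u i) ^ 2) * (∑ i, (v i) ^ 2)
            - 2 * ∑ i, (u i) ^ 2 * (v i) ^ 2) := by
  have hbin (π : Equiv.Perm (Fin D)) (i : Fin D) : (π i : ℕ) / (D / k) < k :=
    Nat.div_lt_of_lt_mul (by rw [Nat.div_mul_cancel hkD]; exact (π i).isLt)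
  have hp : (((D / k : ℕ) : ℝ) - 1) / ((D : ℝ) - 1) = 1 / k * (((D : ℝ) - k) / ((D : ℝ) - 1)) := by
    rw [Nat.cast_div hkD (by positivity)]
    field_simp
  have hdiag : ∑ i, (u i ^ 2 * v i ^ 2 + u i * v i * (u i * v i)) = 2 * ∑ i, u i ^ 2 * v i ^ 2 := by
    rw [mul_sum]
    exact sum_congr rfl fun i _ => by ring
  have hfull : ∑ i, ∑ j, (u i ^ 2 * v j ^ 2 + u i * v i * (u j * v j))
      = (∑ i, u i ^ 2) * ∑ i, v i ^ 2 + (∑ i, u i * v i) ^ 2 := by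
    simp only [sum_add_distrib, sum_mul_sum, sq]
  simp only [hindep.integral_binned_estimator_sub_sq hL4 hm1 hm2 hm4 _ (hbin _)]
  rw [sum_add_distrib, sum_const, card_univ, Fintype.card_perm, Fintype.card_fin, nsmul_eq_mul,
    sum_comm]
  simp_rw [sum_comm (s := univ (α := Equiv.Perm (Fin D))), ← sum_mul,
    sum_perm_ite_div_eq_div (Nat.div_dvd_of_dvd hkD), mul_assoc (D.factorial : ℝ), ← mul_sum,
    ← mul_add, mul_div_cancel_left₀ _ (show (D.factorial : ℝ) ≠ 0 by positivity),
    sum_sum_ite_eq_mul, hp, hdiag, hfull]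
  ring

/-- Variance of the OPORP inner product estimator under the fixed-length binning
scheme (uniformly random permutation, `k` bins of length `D/k`):
`Var(â₁) = (s-1) Σ u_i²v_i² + (1/k)·((D-k)/(D-1))·(a² + Σu_i²·Σv_i² − 2Σu_i²v_i²)`.
Since `â` is unbiased, the variance is `E[(â − a)²]`, where the expectation averages
over the random permutation (uniformly) and over the independent `r`. -/
theorem oporp_fixed_binning_variance
    {Ω : Type*} [MeasurableSpace Ω] (μ : Measure Ω) [IsProbabilityMeasure μ]
    {D k : ℕ} (hk : 0 < k) (hkD : k ∣ D)
    (u v : Fin D → ℝ) (s : ℝ) (r : Fin D → Ω → ℝ)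
    (hrmeas : ∀ i, Measurable (r i))
    (hindep : iIndepFun r μ)
    (hL4 : ∀ i, MemLp (r i) 4 μ)
    (hm1 : ∀ i, ∫ ω, r i ω ∂μ = 0)
    (hm2 : ∀ i, ∫ ω, (r i ω) ^ 2 ∂μ = 1)
    (hm3 : ∀ i, ∫ ω, (r i ω) ^ 3 ∂μ = 0)
    (hm4 : ∀ i, ∫ ω, (r i ω) ^ 4 ∂μ = s) :
    (∑ π : Equiv.Perm (Fin D), ∫ ω,
        ((∑ j : Fin k,
            (∑ i, u i * r i ω * (if ((π i : ℕ) / (D / k) = (j : ℕ)) then (1 : ℝ) else 0)) *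
            (∑ i, v i * r i ω * (if ((π i : ℕ) / (D / k) = (j : ℕ)) then (1 : ℝ) else 0)))
          - ∑ i, u i * v i) ^ 2 ∂μ) / (Nat.factorial D : ℝ)
      = (s - 1) * (∑ i, (u i) ^ 2 * (v i) ^ 2)
        + (1 / k) * (((D : ℝ) - k) / ((D : ℝ) - 1)) *
          ((∑ i, u i * v i) ^ 2 + (∑ i, (u i) ^ 2) * (∑ i, (v i) ^ 2)
            - 2 * ∑ i, (u i) ^ 2 * (v i) ^ 2) :=
  oporp_fixed_binning_variance_general μ hk hkD u v s r hindep hL4 hm1 hm2 hm4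
end

section
/- Under the single-projection setting, E(x^2 y^2) = s Σ_i u_i^2 v_i^2 + Σ_{i≠i'} (u_i^2 v_{i'}^2 + 2 u_i v_i u_{i'} v_{i'}), where x = Σ_i u_i r_i and y = Σ_i v_i r_i. -/
/-!
For independent centred summands the fourth cumulant `E S⁴ - 3 (E S²)²` is additive, so the
fourth moment of the linear form `⟨w, r⟩` is `(s - 3) ∑ wᵢ⁴ + 3 (∑ wᵢ²)²`. The mixed moment
`E x²y²` then follows by polarization, `12 x²y² = (x + y)⁴ + (x - y)⁴ - 2x⁴ - 2y⁴`, since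
`x ± y = ⟨u ± v, r⟩`.
-/

open MeasureTheory ProbabilityTheory Finset

theorem sum_sum_ite_ne {ι M : Type*} [Fintype ι] [DecidableEq ι] [AddCommGroup M]
    (f : ι → ι → M) :
    ∑ i, ∑ j, (if i ≠ j then f i j else 0) = ∑ i, ∑ j, f i j - ∑ i, f i i := by
  rw [eq_sub_iff_add_eq, ← sum_add_distrib]
  refine sum_congr rfl fun i _ => ?_
  rw [← sum_filter, filter_ne, sum_erase_add _ _ (mem_univ i)]

section Algebra

variable {ι : Type*} [Fintype ι] (u v : ι → ℝ)

theorem sum_sum_ite_ne_sq_mul_sq_add [DecidableEq ι] :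
    ∑ i, ∑ j, (if i ≠ j then u i ^ 2 * v j ^ 2 + 2 * (u i * v i) * (u j * v j) else 0)
      = (∑ i, u i ^ 2) * (∑ i, v i ^ 2) + 2 * (∑ i, u i * v i) ^ 2
        - 3 * ∑ i, u i ^ 2 * v i ^ 2 := by
  have hdiag : ∑ i, (u i ^ 2 * v i ^ 2 + 2 * (u i * v i) * (u i * v i))
      = 3 * ∑ i, u i ^ 2 * v i ^ 2 := by
    rw [mul_sum]
    exact sum_congr rfl fun i _ => by ring
  rw [sum_sum_ite_ne, hdiag, sq (∑ i, u i * v i), sum_mul_sum, sum_mul_sum,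
    mul_sum _ _ (2 : ℝ), ← sum_add_distrib]
  refine congrArg (· - _) (sum_congr rfl fun i _ => ?_)
  rw [mul_sum, ← sum_add_distrib]
  exact sum_congr rfl fun j _ => by ring

theorem sum_add_pow_four_add_sum_sub_pow_four :
    ∑ i, (u i + v i) ^ 4 + ∑ i, (u i - v i) ^ 4 - 2 * ∑ i, u i ^ 4 - 2 * ∑ i, v i ^ 4
      = 12 * ∑ i, u i ^ 2 * v i ^ 2 := by
  simp only [mul_sum, ← sum_add_distrib, ← sum_sub_distrib]
  exact sum_congr rfl fun i _ => by ring

end Algebra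

section Moments

variable {Ω : Type*} [MeasurableSpace Ω] {μ : Measure Ω}

theorem MeasureTheory.MemLp.integrable_pow_of_le [IsFiniteMeasure μ] {f : Ω → ℝ} {p k : ℕ}
    (hf : MemLp f p μ) (hk : k ≤ p) : Integrable (fun ω => f ω ^ k) μ := by
  have hmeas := hf.aestronglyMeasurable
  refine (integrable_norm_iff (by fun_prop)).1 ?_
  simpa only [norm_pow] using (hf.mono_exponent (by exact_mod_cast hk)).integrable_norm_pow'

theorem integral_sq_mul_sq_eq_polarization [IsFiniteMeasure μ] {X Y : Ω → ℝ}
    (hX : MemLp X 4 μ) (hY : MemLp Y 4 μ) :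
    ∫ ω, X ω ^ 2 * Y ω ^ 2 ∂μ = (∫ ω, (X ω + Y ω) ^ 4 ∂μ + ∫ ω, (X ω - Y ω) ^ 4 ∂μ
      - 2 * ∫ ω, X ω ^ 4 ∂μ - 2 * ∫ ω, Y ω ^ 4 ∂μ) / 12 := by
  have h4 : ∀ {Z : Ω → ℝ}, MemLp Z 4 μ → Integrable (fun ω => Z ω ^ 4) μ :=
    fun hZ => hZ.integrable_pow_of_le (p := 4) le_rfl
  have hadd : Integrable (fun ω => (X ω + Y ω) ^ 4) μ := h4 (hX.add hY)
  have hsub : Integrable (fun ω => (X ω - Y ω) ^ 4) μ := h4 (hX.sub hY)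
  have hpol : ∀ ω, X ω ^ 2 * Y ω ^ 2
      = ((X ω + Y ω) ^ 4 + (X ω - Y ω) ^ 4 - 2 * X ω ^ 4 - 2 * Y ω ^ 4) / 12 := fun ω => by ring
  simp_rw [hpol]
  rw [integral_div, integral_sub, integral_sub, integral_add hadd hsub, integral_const_mul,
    integral_const_mul]
  · exact hadd.add hsub
  · exact (h4 hX).const_mul 2
  · exact ((hadd.add hsub).sub ((h4 hX).const_mul 2))
  · exact (h4 hY).const_mul 2

theorem ProbabilityTheory.IndepFun.integral_add_pow [IsFiniteMeasure μ] {X Y : Ω → ℝ} {n : ℕ}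
    (hXY : IndepFun X Y μ) (hX : MemLp X n μ) (hY : MemLp Y n μ) :
    ∫ ω, (X ω + Y ω) ^ n ∂μ
      = ∑ k ∈ range (n + 1), (∫ ω, X ω ^ k ∂μ) * (∫ ω, Y ω ^ (n - k) ∂μ) * n.choose k := by
  have hterm : ∀ k ∈ range (n + 1), (∫ ω, X ω ^ k * Y ω ^ (n - k) ∂μ)
      = (∫ ω, X ω ^ k ∂μ) * (∫ ω, Y ω ^ (n - k) ∂μ) ∧
      Integrable (fun ω => X ω ^ k * Y ω ^ (n - k)) μ := by
    intro k hk
    have hind := hXY.comp (measurable_id.pow_const k) (measurable_id.pow_const (n - k))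
    have hXk := hX.integrable_pow_of_le (Nat.lt_succ_iff.1 (mem_range.1 hk))
    have hYk := hY.integrable_pow_of_le (Nat.sub_le n k)
    exact ⟨hind.integral_fun_mul_eq_mul_integral hXk.1 hYk.1, hind.integrable_mul hXk hYk⟩
  simp_rw [add_pow]
  rw [integral_finsetSum _ fun k hk => ((hterm k hk).2.mul_const _)]
  exact sum_congr rfl fun k hk => by rw [integral_mul_const, (hterm k hk).1]

theorem ProbabilityTheory.IndepFun.integral_add_sq [IsProbabilityMeasure μ] {X Y : Ω → ℝ}
    (hXY : IndepFun X Y μ) (hX : MemLp X 2 μ) (hY : MemLp Y 2 μ)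
    (hX0 : ∫ ω, X ω ∂μ = 0) :
    ∫ ω, (X ω + Y ω) ^ 2 ∂μ = ∫ ω, X ω ^ 2 ∂μ + ∫ ω, Y ω ^ 2 ∂μ := by
  rw [hXY.integral_add_pow (n := 2) hX hY]
  norm_num [sum_range_succ, hX0]
  ring

theorem ProbabilityTheory.IndepFun.integral_add_pow_four [IsProbabilityMeasure μ] {X Y : Ω → ℝ}
    (hXY : IndepFun X Y μ) (hX : MemLp X 4 μ) (hY : MemLp Y 4 μ)
    (hX0 : ∫ ω, X ω ∂μ = 0) (hY0 : ∫ ω, Y ω ∂μ = 0) :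
    ∫ ω, (X ω + Y ω) ^ 4 ∂μ
      = ∫ ω, X ω ^ 4 ∂μ + 6 * (∫ ω, X ω ^ 2 ∂μ) * (∫ ω, Y ω ^ 2 ∂μ) + ∫ ω, Y ω ^ 4 ∂μ := by
  rw [hXY.integral_add_pow (n := 4) hX hY]
  norm_num [sum_range_succ, hX0, hY0, Nat.choose]
  ring

section IndependentSum

variable {ι : Type*} {X : ι → Ω → ℝ}

theorem ProbabilityTheory.iIndepFun.indepFun_finsetSum_apply (hind : iIndepFun X μ)
    (hX : ∀ i, AEMeasurable (X i) μ) {T : Finset ι} {a : ι} (ha : a ∉ T) :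
    IndepFun (X a) (fun ω => ∑ i ∈ T, X i ω) μ := by
  simpa only [← Finset.sum_apply] using (hind.indepFun_finsetSum_of_notMem₀ hX ha).symm

variable [IsProbabilityMeasure μ]

theorem ProbabilityTheory.iIndepFun.integral_finsetSum_sq (hind : iIndepFun X μ)
    (hX : ∀ i, MemLp (X i) 2 μ) (h0 : ∀ i, ∫ ω, X i ω ∂μ = 0) (T : Finset ι) :
    ∫ ω, (∑ i ∈ T, X i ω) ^ 2 ∂μ = ∑ i ∈ T, ∫ ω, X i ω ^ 2 ∂μ := by
  classical
  induction T using Finset.induction_on with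
  | empty => simp
  | insert a T ha ih =>
    simp only [sum_insert ha]
    rw [(hind.indepFun_finsetSum_apply (fun i => (hX i).aemeasurable) ha).integral_add_sq
      (hX a) (memLp_finsetSum T fun i _ => hX i) (h0 a), ih]

theorem ProbabilityTheory.iIndepFun.integral_finsetSum_pow_four (hind : iIndepFun X μ)
    (hX : ∀ i, MemLp (X i) 4 μ) (h0 : ∀ i, ∫ ω, X i ω ∂μ = 0) (T : Finset ι) :
    ∫ ω, (∑ i ∈ T, X i ω) ^ 4 ∂μ
      = ∑ i ∈ T, (∫ ω, X i ω ^ 4 ∂μ - 3 * (∫ ω, X i ω ^ 2 ∂μ) ^ 2)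
        + 3 * (∑ i ∈ T, ∫ ω, X i ω ^ 2 ∂μ) ^ 2 := by
  classical
  have hX2 : ∀ i, MemLp (X i) 2 μ := fun i => (hX i).mono_exponent (by norm_num)
  have hsum0 : ∀ T : Finset ι, ∫ ω, ∑ i ∈ T, X i ω ∂μ = 0 := fun T => by
    rw [integral_finsetSum _ fun i _ => (hX i).integrable (by norm_num)]
    exact sum_eq_zero fun i _ => h0 i
  induction T using Finset.induction_on with
  | empty => simp
  | insert a T ha ih =>
    simp only [sum_insert ha]
    rw [(hind.indepFun_finsetSum_apply (fun i => (hX i).aemeasurable) ha).integral_add_pow_four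
      (hX a) (memLp_finsetSum T fun i _ => hX i) (h0 a) (hsum0 T), ih,
      hind.integral_finsetSum_sq hX2 h0]
    ring

theorem ProbabilityTheory.iIndepFun.integral_sum_mul_pow_four [Fintype ι] {r : ι → Ω → ℝ}
    {s : ℝ} (hind : iIndepFun r μ) (hr : ∀ i, MemLp (r i) 4 μ) (h1 : ∀ i, ∫ ω, r i ω ∂μ = 0)
    (h2 : ∀ i, ∫ ω, r i ω ^ 2 ∂μ = 1) (h4 : ∀ i, ∫ ω, r i ω ^ 4 ∂μ = s) (w : ι → ℝ) :
    ∫ ω, (∑ i, w i * r i ω) ^ 4 ∂μ = (s - 3) * ∑ i, w i ^ 4 + 3 * (∑ i, w i ^ 2) ^ 2 := by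
  have hind' : iIndepFun (fun i ω => w i * r i ω) μ :=
    hind.comp (fun i x => w i * x) fun i => measurable_const.mul measurable_id
  rw [hind'.integral_finsetSum_pow_four (fun i => (hr i).const_mul (w i))
    (fun i => by rw [integral_const_mul, h1, mul_zero])]
  simp only [mul_pow, integral_const_mul, h2, h4, mul_one, mul_sum]
  exact congrArg₂ _ (sum_congr rfl fun i _ => by ring) rfl

end IndependentSum

end Moments

theorem single_projection_x2y2_general
    {Ω : Type*} [MeasurableSpace Ω] (μ : Measure Ω) [IsProbabilityMeasure μ]
    {D : ℕ} (u v : Fin D → ℝ) (s : ℝ) (r : Fin D → Ω → ℝ)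
    (hindep : iIndepFun r μ)
    (hL4 : ∀ i, MemLp (r i) 4 μ)
    (hm1 : ∀ i, ∫ ω, r i ω ∂μ = 0)
    (hm2 : ∀ i, ∫ ω, (r i ω) ^ 2 ∂μ = 1)
    (hm4 : ∀ i, ∫ ω, (r i ω) ^ 4 ∂μ = s) :
    ∫ ω, (∑ i, u i * r i ω) ^ 2 * (∑ i, v i * r i ω) ^ 2 ∂μ
      = s * ∑ i, (u i) ^ 2 * (v i) ^ 2
        + ∑ i, ∑ i', (if i ≠ i' then
            (u i) ^ 2 * (v i') ^ 2 + 2 * (u i * v i) * (u i' * v i') else 0) := by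
  have hlin : ∀ w : Fin D → ℝ, MemLp (fun ω => ∑ i, w i * r i ω) 4 μ := fun w =>
    memLp_finsetSum _ fun i _ => (hL4 i).const_mul (w i)
  have hplus : ∑ i, (u i + v i) ^ 2 = ∑ i, u i ^ 2 + 2 * ∑ i, u i * v i + ∑ i, v i ^ 2 := by
    simp only [add_sq, sum_add_distrib, mul_sum, mul_assoc]
  have hminus : ∑ i, (u i - v i) ^ 2 = ∑ i, u i ^ 2 - 2 * ∑ i, u i * v i + ∑ i, v i ^ 2 := by
    simp only [sub_sq, sum_add_distrib, sum_sub_distrib, mul_sum, mul_assoc]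
  rw [integral_sq_mul_sq_eq_polarization (hlin u) (hlin v)]
  simp only [← sum_add_distrib, ← sum_sub_distrib, ← add_mul, ← sub_mul,
    hindep.integral_sum_mul_pow_four hL4 hm1 hm2 hm4]
  rw [sum_sum_ite_ne_sq_mul_sq_add, hplus, hminus]
  linear_combination (s - 3) / 12 * sum_add_pow_four_add_sum_sub_pow_four u v

/-- Single projection: for `x = Σ u_i r_i`, `y = Σ v_i r_i` with `r_i` independent,
`E(r_i)=0`, `E(r_i²)=1`, `E(r_i³)=0`, `E(r_i⁴)=s`, we have
`E(x²y²) = s Σ u_i²v_i² + Σ_{i≠i'} (u_i²v_{i'}² + 2 u_i v_i u_{i'} v_{i'})`. -/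
theorem single_projection_x2y2
    {Ω : Type*} [MeasurableSpace Ω] (μ : Measure Ω) [IsProbabilityMeasure μ]
    {D : ℕ} (u v : Fin D → ℝ) (s : ℝ) (r : Fin D → Ω → ℝ)
    (hrmeas : ∀ i, Measurable (r i))
    (hindep : iIndepFun r μ)
    (hL4 : ∀ i, MemLp (r i) 4 μ)
    (hm1 : ∀ i, ∫ ω, r i ω ∂μ = 0)
    (hm2 : ∀ i, ∫ ω, (r i ω) ^ 2 ∂μ = 1)
    (hm3 : ∀ i, ∫ ω, (r i ω) ^ 3 ∂μ = 0)
    (hm4 : ∀ i, ∫ ω, (r i ω) ^ 4 ∂μ = s) :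
    ∫ ω, (∑ i, u i * r i ω) ^ 2 * (∑ i, v i * r i ω) ^ 2 ∂μ
      = s * ∑ i, (u i) ^ 2 * (v i) ^ 2
        + ∑ i, ∑ i', (if i ≠ i' then
            (u i) ^ 2 * (v i') ^ 2 + 2 * (u i * v i) * (u i' * v i') else 0) :=
  single_projection_x2y2_general μ u v s r hindep hL4 hm1 hm2 hm4
end
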